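/- arXiv:1608.03057 — 6 statements merged into one kernel-verified Lean document; each statement's English description precedes it below -/
import Mathlib

section
/- Let u : ℝ² → ℝ be a smooth function of (x,t) and fix k ∈ ℂ with k ≠ 0. Define the 2×2 complex matrix-valued functions U(x,t) = ik·[[1, u_x],[u_x, −1]] and V(x,t) = (ik/2)·u²·[[1, u_x],[u_x, −1]] + (1/(4ik))·σ₃ − (iu/2)·σ₂. Then at any point (x,t), the zero-curvature equation ∂_t U − ∂_x V + U·V − V·U = 0 holds if and only if u_{xt} = u + (1/6)(u³)_{xx} holds at (x,t). -/
noncomputable section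

/-- Partial derivative in the first (space) variable. -/
def pdx (f : ℝ → ℝ → ℝ) (x t : ℝ) : ℝ := deriv (fun x' => f x' t) x

/-- The Pauli matrix σ₂. -/
def sigma2 : Matrix (Fin 2) (Fin 2) ℂ := !![0, -Complex.I; Complex.I, 0]

/-- The Pauli matrix σ₃. -/
def sigma3 : Matrix (Fin 2) (Fin 2) ℂ := !![1, 0; 0, -1]

/-- The x-part U(x,t) = ik·[[1, u_x],[u_x, −1]] of the WKI Lax pair. -/
def laxU (u : ℝ → ℝ → ℝ) (k : ℂ) (x t : ℝ) : Matrix (Fin 2) (Fin 2) ℂ :=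
  (Complex.I * k) • !![1, (pdx u x t : ℂ); (pdx u x t : ℂ), -1]

/-- The t-part V(x,t) = (ik/2)u²·[[1, u_x],[u_x, −1]] + (1/(4ik))σ₃ − (iu/2)σ₂. -/
def laxV (u : ℝ → ℝ → ℝ) (k : ℂ) (x t : ℝ) : Matrix (Fin 2) (Fin 2) ℂ :=
  (Complex.I * k / 2 * (u x t : ℂ) ^ 2) • !![1, (pdx u x t : ℂ); (pdx u x t : ℂ), -1]
    + (1 / (4 * Complex.I * k)) • sigma3
    - (Complex.I * (u x t : ℂ) / 2) • sigma2

/-- Entrywise partial derivative in t of a matrix-valued function. -/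
def matDt (A : ℝ → ℝ → Matrix (Fin 2) (Fin 2) ℂ) (x t : ℝ) : Matrix (Fin 2) (Fin 2) ℂ :=
  Matrix.of fun i j => deriv (fun t' => A x t' i j) t

/-- Entrywise partial derivative in x of a matrix-valued function. -/
def matDx (A : ℝ → ℝ → Matrix (Fin 2) (Fin 2) ℂ) (x t : ℝ) : Matrix (Fin 2) (Fin 2) ℂ :=
  Matrix.of fun i j => deriv (fun x' => A x' t i j) x

private lemma zc_key_aux (k A P Q R : ℂ) (hk : k ≠ 0) :
    (!![0, Complex.I * k * R; Complex.I * k * R, 0]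
      - !![Complex.I * k / 2 * (P * A + A * P),
           Complex.I * k / 2 * ((P * A + A * P) * P + A * A * Q) - P/2;
           Complex.I * k / 2 * ((P * A + A * P) * P + A * A * Q) + P/2,
           -(Complex.I * k / 2 * (P * A + A * P))]
      + !![Complex.I * k, Complex.I * k * P; Complex.I * k * P, -(Complex.I * k)]
        * !![Complex.I * k / 2 * (A * A) + -Complex.I/(4*k),
             Complex.I * k / 2 * (A * A * P) - A / 2;
             Complex.I * k / 2 * (A * A * P) + A / 2,
             -(Complex.I * k / 2 * (A * A)) - -Complex.I/(4*k)]
      - !![Complex.I * k / 2 * (A * A) + -Complex.I/(4*k),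
             Complex.I * k / 2 * (A * A * P) - A / 2;
             Complex.I * k / 2 * (A * A * P) + A / 2,
             -(Complex.I * k / 2 * (A * A)) - -Complex.I/(4*k)]
        * !![Complex.I * k, Complex.I * k * P; Complex.I * k * P, -(Complex.I * k)])
    = !![0, Complex.I * k * (R - A - A * P * P - A * A * Q / 2);
         Complex.I * k * (R - A - A * P * P - A * A * Q / 2), 0] := by
  ext i j
  fin_cases i <;> fin_cases j <;>
    · simp [Matrix.mul_apply, Fin.sum_univ_two]
      ring_nf
      try simp only [Complex.I_sq]
      try field_simp
      try ring_nf
      try ring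

/-- For smooth u and k ≠ 0, the zero-curvature equation
∂ₜU − ∂ₓV + UV − VU = 0 holds at (x,t) iff the short pulse equation
u_{xt} = u + (1/6)(u³)_{xx} holds at (x,t). -/
theorem zero_curvature_iff_short_pulse
    (u : ℝ → ℝ → ℝ) (hu : ContDiff ℝ (⊤ : ℕ∞) (Function.uncurry u))
    (k : ℂ) (hk : k ≠ 0) (x t : ℝ) :
    matDt (laxU u k) x t - matDx (laxV u k) x t
        + laxU u k x t * laxV u k x t - laxV u k x t * laxU u k x t = 0
      ↔ deriv (fun t' => deriv (fun x' => u x' t') x) t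
          = u x t + 1 / 6 * deriv (fun x' => deriv (fun x'' => u x'' t ^ 3) x') x := by
  have hIinv : (1:ℂ)/(4*Complex.I*k) = -Complex.I/(4*k) := by
    rw [div_eq_div_iff (by simp [Complex.I_ne_zero, hk]) (by simp [hk])]
    ring_nf
    simp [Complex.I_sq]
  -- smoothness of pdx u
  have hpdx : ContDiff ℝ (⊤ : ℕ∞) (Function.uncurry (pdx u)) := by
    have h1 : ContDiff ℝ (⊤ : ℕ∞) (fun p : ℝ × ℝ => fderiv ℝ (Function.uncurry u) p (1, 0)) :=
      (hu.fderiv_right (by simp)).clm_apply contDiff_const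
    have h2 : Function.uncurry (pdx u)
        = fun p : ℝ × ℝ => fderiv ℝ (Function.uncurry u) p (1, 0) := by
      funext p
      obtain ⟨a, b⟩ := p
      have hd : HasDerivAt (fun x' => u x' b) (fderiv ℝ (Function.uncurry u) (a, b) (1, 0)) a := by
        have := ((hu.differentiable (by simp) (a, b)).hasFDerivAt).comp_hasDerivAt a
          ((hasDerivAt_id a).prodMk (hasDerivAt_const a b))
        exact this
      simpa [Function.uncurry, pdx] using hd.deriv
    rw [h2]; exact h1
  -- basic derivative facts
  have hux : ∀ x' t', HasDerivAt (fun y => u y t') (pdx u x' t') x' := by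
    intro x' t'
    have h : ContDiff ℝ (⊤ : ℕ∞) (fun y => u y t') := hu.comp (contDiff_id.prodMk contDiff_const)
    exact (h.differentiable (by simp) x').hasDerivAt
  have huxx : HasDerivAt (fun y => pdx u y t) (deriv (fun y => pdx u y t) x) x := by
    have h : ContDiff ℝ (⊤ : ℕ∞) (fun y => pdx u y t) := hpdx.comp (contDiff_id.prodMk contDiff_const)
    exact (h.differentiable (by simp) x).hasDerivAt
  have huxt : HasDerivAt (fun t' => pdx u x t') (deriv (fun t' => pdx u x t') t) t := by
    have h : ContDiff ℝ (⊤ : ℕ∞) (fun t' => pdx u x t') := hpdx.comp (contDiff_const.prodMk contDiff_id)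
    exact (h.differentiable (by simp) t).hasDerivAt
  -- complex lifts
  have hC : ∀ x', HasDerivAt (fun y => ((u y t : ℝ) : ℂ)) ((pdx u x' t : ℝ) : ℂ) x' :=
    fun x' => (hux x' t).ofReal_comp
  have hCx : HasDerivAt (fun y => ((pdx u y t : ℝ) : ℂ))
      ((deriv (fun y => pdx u y t) x : ℝ) : ℂ) x := huxx.ofReal_comp
  have hCt : HasDerivAt (fun t' => ((pdx u x t' : ℝ) : ℂ))
      ((deriv (fun t' => pdx u x t') t : ℝ) : ℂ) t := huxt.ofReal_comp
  -- explicit matrices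
  have hU : ∀ x' t', laxU u k x' t' =
      !![Complex.I * k, Complex.I * k * (pdx u x' t' : ℂ);
         Complex.I * k * (pdx u x' t' : ℂ), -(Complex.I * k)] := by
    intro x' t'
    ext i j
    fin_cases i <;> fin_cases j <;> simp [laxU]
  have hV : ∀ x', laxV u k x' t =
      !![Complex.I * k / 2 * ((u x' t : ℂ) * (u x' t : ℂ)) + -Complex.I/(4*k),
         Complex.I * k / 2 * ((u x' t : ℂ) * (u x' t : ℂ) * (pdx u x' t : ℂ)) - (u x' t : ℂ) / 2;
         Complex.I * k / 2 * ((u x' t : ℂ) * (u x' t : ℂ) * (pdx u x' t : ℂ)) + (u x' t : ℂ) / 2,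
         -(Complex.I * k / 2 * ((u x' t : ℂ) * (u x' t : ℂ))) - -Complex.I/(4*k)] := by
    intro x'
    ext i j
    fin_cases i <;> fin_cases j <;>
      · simp [laxV, sigma2, sigma3, hIinv]
        ring_nf
        try simp only [Complex.I_sq]
        try ring_nf
        try simp [Complex.I_sq]
        try ring
  -- entrywise t-derivative of U
  have hDt : matDt (laxU u k) x t =
      !![0, Complex.I * k * ((deriv (fun t' => pdx u x t') t : ℝ) : ℂ);
         Complex.I * k * ((deriv (fun t' => pdx u x t') t : ℝ) : ℂ), 0] := by
    ext i j
    simp only [matDt, Matrix.of_apply, hU]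
    fin_cases i <;> fin_cases j <;>
      simp only [Matrix.cons_val', Matrix.cons_val_zero, Matrix.cons_val_one, Matrix.head_cons,
        Matrix.empty_val', Matrix.cons_val_fin_one, Matrix.head_fin_const, Fin.mk_zero, Fin.mk_one]
    · simp
    · exact (hCt.const_mul (Complex.I * k)).deriv
    · exact (hCt.const_mul (Complex.I * k)).deriv
    · simp
  -- entrywise x-derivative of V
  have hDx : matDx (laxV u k) x t =
      !![Complex.I * k / 2 * ((pdx u x t : ℂ) * (u x t : ℂ) + (u x t : ℂ) * (pdx u x t : ℂ)),
         Complex.I * k / 2 * (((pdx u x t : ℂ) * (u x t : ℂ) + (u x t : ℂ) * (pdx u x t : ℂ))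
              * (pdx u x t : ℂ)
            + (u x t : ℂ) * (u x t : ℂ) * ((deriv (fun y => pdx u y t) x : ℝ) : ℂ))
          - (pdx u x t : ℂ) / 2;
         Complex.I * k / 2 * (((pdx u x t : ℂ) * (u x t : ℂ) + (u x t : ℂ) * (pdx u x t : ℂ))
              * (pdx u x t : ℂ)
            + (u x t : ℂ) * (u x t : ℂ) * ((deriv (fun y => pdx u y t) x : ℝ) : ℂ))
          + (pdx u x t : ℂ) / 2,
         -(Complex.I * k / 2 * ((pdx u x t : ℂ) * (u x t : ℂ)
            + (u x t : ℂ) * (pdx u x t : ℂ)))] := by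
    have h00 := (((hC x).mul (hC x)).const_mul (Complex.I * k / 2)).add_const
      (-Complex.I/(4*k))
    have h01 := ((((hC x).mul (hC x)).mul hCx).const_mul (Complex.I * k / 2)).sub
      ((hC x).div_const 2)
    have h10 := ((((hC x).mul (hC x)).mul hCx).const_mul (Complex.I * k / 2)).add
      ((hC x).div_const 2)
    have h11 := ((((hC x).mul (hC x)).const_mul (Complex.I * k / 2)).neg).sub_const
      (-Complex.I/(4*k))
    ext i j
    simp only [matDx, Matrix.of_apply, hV]
    fin_cases i <;> fin_cases j <;>
      simp only [Matrix.cons_val', Matrix.cons_val_zero, Matrix.cons_val_one, Matrix.head_cons,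
        Matrix.empty_val', Matrix.cons_val_fin_one, Matrix.head_fin_const, Fin.mk_zero, Fin.mk_one]
    · exact h00.deriv.trans (by ring)
    · exact h01.deriv.trans (by simp only [Pi.mul_apply])
    · exact h10.deriv.trans (by simp only [Pi.mul_apply])
    · exact h11.deriv.trans (by ring)
  -- the third derivative appearing on the RHS
  have hD3 : deriv (fun x' => deriv (fun x'' => u x'' t ^ 3) x') x
      = 6 * u x t * (pdx u x t) ^ 2 + 3 * (u x t) ^ 2 * deriv (fun y => pdx u y t) x := by
    have h1 : (fun x' => deriv (fun x'' => u x'' t ^ 3) x')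
        = fun x' => (3 : ℝ) * (u x' t) ^ 2 * pdx u x' t := by
      funext x'
      rw [((hux x' t).fun_pow 3).deriv]
      norm_num
    rw [h1]
    have h2 := (((hux x t).fun_pow 2).const_mul (3 : ℝ)).fun_mul huxx
    rw [h2.deriv]
    push_cast
    ring
  -- key matrix identity
  have key : matDt (laxU u k) x t - matDx (laxV u k) x t
        + laxU u k x t * laxV u k x t - laxV u k x t * laxU u k x t
      = !![0, Complex.I * k * (((deriv (fun t' => pdx u x t') t : ℝ) : ℂ) - (u x t : ℂ)
              - (u x t : ℂ) * (pdx u x t : ℂ) * (pdx u x t : ℂ)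
              - (u x t : ℂ) * (u x t : ℂ) * ((deriv (fun y => pdx u y t) x : ℝ) : ℂ) / 2);
           Complex.I * k * (((deriv (fun t' => pdx u x t') t : ℝ) : ℂ) - (u x t : ℂ)
              - (u x t : ℂ) * (pdx u x t : ℂ) * (pdx u x t : ℂ)
              - (u x t : ℂ) * (u x t : ℂ) * ((deriv (fun y => pdx u y t) x : ℝ) : ℂ) / 2), 0] := by
    rw [hDt, hDx, hU, hV]
    exact zc_key_aux k (u x t : ℂ) (pdx u x t : ℂ)
      ((deriv (fun y => pdx u y t) x : ℝ) : ℂ)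
      ((deriv (fun t' => pdx u x t') t : ℝ) : ℂ) hk
  have hrw : deriv (fun t' => deriv (fun x' => u x' t') x) t
      = deriv (fun t' => pdx u x t') t := rfl
  rw [hrw, key, hD3]
  have hIk : Complex.I * k ≠ 0 := mul_ne_zero Complex.I_ne_zero hk
  constructor
  · intro h
    have h01 : (!![0, Complex.I * k * (((deriv (fun t' => pdx u x t') t : ℝ) : ℂ) - (u x t : ℂ)
              - (u x t : ℂ) * (pdx u x t : ℂ) * (pdx u x t : ℂ)
              - (u x t : ℂ) * (u x t : ℂ) * ((deriv (fun y => pdx u y t) x : ℝ) : ℂ) / 2);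
           Complex.I * k * (((deriv (fun t' => pdx u x t') t : ℝ) : ℂ) - (u x t : ℂ)
              - (u x t : ℂ) * (pdx u x t : ℂ) * (pdx u x t : ℂ)
              - (u x t : ℂ) * (u x t : ℂ) * ((deriv (fun y => pdx u y t) x : ℝ) : ℂ) / 2), 0]
          : Matrix (Fin 2) (Fin 2) ℂ) 0 1 = (0 : Matrix (Fin 2) (Fin 2) ℂ) 0 1 := by rw [h]
    simp only [Matrix.cons_val', Matrix.cons_val_zero, Matrix.cons_val_one, Matrix.head_cons,
      Matrix.empty_val', Matrix.cons_val_fin_one, Matrix.zero_apply] at h01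
    have hb : ((deriv (fun t' => pdx u x t') t : ℝ) : ℂ) - (u x t : ℂ)
        - (u x t : ℂ) * (pdx u x t : ℂ) * (pdx u x t : ℂ)
        - (u x t : ℂ) * (u x t : ℂ) * ((deriv (fun y => pdx u y t) x : ℝ) : ℂ) / 2 = 0 := by
      rcases mul_eq_zero.mp h01 with h' | h'
      · exact absurd h' hIk
      · exact h'
    have hr : deriv (fun t' => pdx u x t') t - u x t
        - u x t * pdx u x t * pdx u x t
        - u x t * u x t * deriv (fun y => pdx u y t) x / 2 = 0 := by
      have : ((deriv (fun t' => pdx u x t') t - u x t - u x t * pdx u x t * pdx u x t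
          - u x t * u x t * deriv (fun y => pdx u y t) x / 2 : ℝ) : ℂ) = 0 := by
        push_cast
        rw [← hb]
      exact_mod_cast this
    nlinarith [hr]
  · intro h
    have hr : deriv (fun t' => pdx u x t') t - u x t
        - u x t * pdx u x t * pdx u x t
        - u x t * u x t * deriv (fun y => pdx u y t) x / 2 = 0 := by nlinarith [h]
    have hb : ((deriv (fun t' => pdx u x t') t : ℝ) : ℂ) - (u x t : ℂ)
        - (u x t : ℂ) * (pdx u x t : ℂ) * (pdx u x t : ℂ)
        - (u x t : ℂ) * (u x t : ℂ) * ((deriv (fun y => pdx u y t) x : ℝ) : ℂ) / 2 = 0 := by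
      have := congrArg (fun r : ℝ => (r : ℂ)) hr
      push_cast at this
      rw [← this]
    ext i j
    fin_cases i <;> fin_cases j <;> simp [hb]
end
end

section
/- Let u : ℝ² → ℝ be a smooth function of (x,t) satisfying the short pulse equation u_{xt} = u + (1/6)(u³)_{xx} on ℝ². Set m(x,t) = 1 + u_x(x,t)². Then the conservation law ∂_t(√m) = (1/2)·∂_x(u²·√m) holds at every point (x,t) ∈ ℝ². -/
private lemma hasDerivAt_fst' {F : ℝ × ℝ → ℝ} (hF : ContDiff ℝ (⊤ : ℕ∞) F) (x t : ℝ) :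
    HasDerivAt (fun x' => F (x', t)) (fderiv ℝ F (x, t) (1, 0)) x :=
  (hF.differentiable (by simp) (x, t)).hasFDerivAt.comp_hasDerivAt x
    ((hasDerivAt_id x).prodMk (hasDerivAt_const x t))

private lemma hasDerivAt_snd' {F : ℝ × ℝ → ℝ} (hF : ContDiff ℝ (⊤ : ℕ∞) F) (x t : ℝ) :
    HasDerivAt (fun t' => F (x, t')) (fderiv ℝ F (x, t) (0, 1)) t :=
  (hF.differentiable (by simp) (x, t)).hasFDerivAt.comp_hasDerivAt t
    ((hasDerivAt_const t x).prodMk (hasDerivAt_id t))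

/-- If u is a smooth solution of the short pulse equation u_{xt} = u + (1/6)(u³)_{xx}
and m = 1 + u_x², then the conservation law ∂ₜ(√m) = (1/2)·∂ₓ(u²·√m) holds at
every point (x,t). -/
theorem short_pulse_conservation_law
    (u : ℝ → ℝ → ℝ) (hu : ContDiff ℝ (⊤ : ℕ∞) (Function.uncurry u))
    (hspe : ∀ x t : ℝ,
      deriv (fun t' => deriv (fun x' => u x' t') x) t
        = u x t + 1 / 6 * deriv (fun x' => deriv (fun x'' => u x'' t ^ 3) x') x)
    (x t : ℝ) :
    deriv (fun t' => Real.sqrt (1 + deriv (fun x' => u x' t') x ^ 2)) t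
      = 1 / 2 * deriv (fun x' => u x' t ^ 2 * Real.sqrt (1 + deriv (fun x'' => u x'' t) x' ^ 2)) x := by
  set U : ℝ × ℝ → ℝ := Function.uncurry u with hU
  -- the partial derivative in x, as a smooth function V
  set V : ℝ × ℝ → ℝ := fun p => fderiv ℝ U p (1, 0) with hVdef
  have hV : ContDiff ℝ (⊤ : ℕ∞) V := (hu.fderiv_right (by simp)).clm_apply contDiff_const
  have hux : ∀ x' t' : ℝ, HasDerivAt (fun y => u y t') (V (x', t')) x' :=
    fun x' t' => hasDerivAt_fst' hu x' t'
  have hderiv_ux : ∀ x' t' : ℝ, deriv (fun y => u y t') x' = V (x', t') :=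
    fun x' t' => (hux x' t').deriv
  set w : ℝ := u x t with hw
  set v : ℝ := V (x, t) with hv
  set a : ℝ := fderiv ℝ V (x, t) (0, 1) with ha
  set b : ℝ := fderiv ℝ V (x, t) (1, 0) with hb
  have hVt : HasDerivAt (fun t' => V (x, t')) a t := hasDerivAt_snd' hV x t
  have hVx : HasDerivAt (fun x' => V (x', t)) b x := hasDerivAt_fst' hV x t
  have hm_pos : (0:ℝ) < 1 + v ^ 2 := by positivity
  have hm_ne : (1:ℝ) + v ^ 2 ≠ 0 := ne_of_gt hm_pos
  have hsqrt_pos : (0:ℝ) < Real.sqrt (1 + v ^ 2) := Real.sqrt_pos.mpr hm_pos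
  have hsqrt_ne : Real.sqrt (1 + v ^ 2) ≠ 0 := ne_of_gt hsqrt_pos
  -- compute the short-pulse equation in terms of V
  have hcube : ∀ x' : ℝ, deriv (fun y => u y t ^ 3) x' = 3 * u x' t ^ 2 * V (x', t) := by
    intro x'
    exact ((hux x' t).pow 3).deriv
  have hrhs : deriv (fun x' => deriv (fun y => u y t ^ 3) x') x
      = 6 * w * v * v + 3 * w ^ 2 * b := by
    have h1 : (fun x' => deriv (fun y => u y t ^ 3) x')
        = fun x' => 3 * u x' t ^ 2 * V (x', t) := funext hcube
    rw [h1]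
    have h2 : HasDerivAt (fun x' => 3 * u x' t ^ 2 * V (x', t))
        ((3 * (2 * u x t ^ 1 * V (x, t))) * V (x, t) + 3 * u x t ^ 2 * b) x :=
      (((hux x t).pow 2).const_mul 3).mul hVx
    rw [h2.deriv]
    ring
  have hlhs_spe : deriv (fun t' => deriv (fun x' => u x' t') x) t = a := by
    have h1 : (fun t' => deriv (fun x' => u x' t') x) = fun t' => V (x, t') := by
      funext t'
      exact hderiv_ux x t'
    rw [h1, hVt.deriv]
  have hA : a = w + w * v ^ 2 + 1 / 2 * w ^ 2 * b := by
    have := hspe x t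
    rw [hlhs_spe, hrhs] at this
    rw [this]; ring
  -- LHS of the goal
  have hL : HasDerivAt (fun t' => Real.sqrt (1 + V (x, t') ^ 2))
      ((0 + 2 * V (x, t) ^ 1 * a) / (2 * Real.sqrt (1 + v ^ 2))) t := by
    have hinner : HasDerivAt (fun t' => 1 + V (x, t') ^ 2) (0 + 2 * V (x, t) ^ 1 * a) t :=
      (hasDerivAt_const t (1:ℝ)).add (hVt.pow 2)
    exact hinner.sqrt hm_ne
  have hLgoal : deriv (fun t' => Real.sqrt (1 + deriv (fun x' => u x' t') x ^ 2)) t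
      = (2 * v * a) / (2 * Real.sqrt (1 + v ^ 2)) := by
    have h1 : (fun t' => Real.sqrt (1 + deriv (fun x' => u x' t') x ^ 2))
        = fun t' => Real.sqrt (1 + V (x, t') ^ 2) := by
      funext t'
      rw [hderiv_ux x t']
    rw [h1, hL.deriv]
    rw [← hv]
    ring_nf
  -- RHS of the goal
  have hsq : HasDerivAt (fun x' => Real.sqrt (1 + V (x', t) ^ 2))
      ((0 + 2 * V (x, t) ^ 1 * b) / (2 * Real.sqrt (1 + v ^ 2))) x := by
    have hinner : HasDerivAt (fun x' => 1 + V (x', t) ^ 2) (0 + 2 * V (x, t) ^ 1 * b) x :=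
      (hasDerivAt_const x (1:ℝ)).add (hVx.pow 2)
    exact hinner.sqrt hm_ne
  have hR : HasDerivAt (fun x' => u x' t ^ 2 * Real.sqrt (1 + V (x', t) ^ 2))
      ((2 * u x t ^ 1 * V (x, t)) * Real.sqrt (1 + v ^ 2)
        + u x t ^ 2 * ((0 + 2 * V (x, t) ^ 1 * b) / (2 * Real.sqrt (1 + v ^ 2)))) x :=
    ((hux x t).pow 2).mul hsq
  have hRgoal : deriv (fun x' => u x' t ^ 2 * Real.sqrt (1 + deriv (fun y => u y t) x' ^ 2)) x
      = 2 * w * v * Real.sqrt (1 + v ^ 2) + w ^ 2 * (v * b / Real.sqrt (1 + v ^ 2)) := by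
    have h1 : (fun x' => u x' t ^ 2 * Real.sqrt (1 + deriv (fun y => u y t) x' ^ 2))
        = fun x' => u x' t ^ 2 * Real.sqrt (1 + V (x', t) ^ 2) := by
      funext x'
      rw [hderiv_ux x' t]
    rw [h1, hR.deriv]
    field_simp
    ring
  rw [hLgoal, hRgoal, hA]
  have hmsq : Real.sqrt (1 + v ^ 2) * Real.sqrt (1 + v ^ 2) = 1 + v ^ 2 :=
    Real.mul_self_sqrt (le_of_lt hm_pos)
  field_simp
  linear_combination (-2 * w * v) * hmsq
end

section
/- Let u : ℝ² → ℝ be a smooth solution of the short pulse equation u_{xt} = u + (1/6)(u³)_{xx}, and set m = 1 + u_x². Assume that for each compact time interval the function x ↦ ∂_t(√(m(x,t)) − 1) is dominated on ℝ by a fixed integrable function, x ↦ √(m(x,t)) − 1 is integrable for each t, and u(x,t)²·√(m(x,t)) → 0 as x → ±∞. Then the quantity c(t) = ∫_ℝ (√(m(x,t)) − 1) dx is independent of t. -/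
open MeasureTheory Filter

private lemma aux_contDiff_pd {f : ℝ × ℝ → ℝ} (hf : ContDiff ℝ (⊤ : ℕ∞) f) (v : ℝ × ℝ) :
    ContDiff ℝ (⊤ : ℕ∞) (fun p => fderiv ℝ f p v) :=
  (hf.fderiv_right (by simp)).clm_apply contDiff_const

private lemma aux_hasDerivAt_x {f : ℝ × ℝ → ℝ} (hf : ContDiff ℝ (⊤ : ℕ∞) f) (x t : ℝ) :
    HasDerivAt (fun x' => f (x', t)) (fderiv ℝ f (x, t) (1, 0)) x := by
  have h1 : HasDerivAt (fun x' : ℝ => ((x', t) : ℝ × ℝ)) ((1 : ℝ), (0 : ℝ)) x :=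
    (hasDerivAt_id x).prodMk (hasDerivAt_const x t)
  exact ((hf.differentiable (by simp) (x, t)).hasFDerivAt).comp_hasDerivAt x h1

private lemma aux_hasDerivAt_t {f : ℝ × ℝ → ℝ} (hf : ContDiff ℝ (⊤ : ℕ∞) f) (x t : ℝ) :
    HasDerivAt (fun t' => f (x, t')) (fderiv ℝ f (x, t) (0, 1)) t := by
  have h1 : HasDerivAt (fun t' : ℝ => ((x, t') : ℝ × ℝ)) ((0 : ℝ), (1 : ℝ)) t :=
    (hasDerivAt_const t x).prodMk (hasDerivAt_id t)
  exact ((hf.differentiable (by simp) (x, t)).hasFDerivAt).comp_hasDerivAt t h1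

/-- For a smooth solution u of the short pulse equation with m = 1 + u_x², assuming
domination on ℝ for compact time intervals, integrability of x ↦ √m − 1 for each t,
and decay u²√m → 0 as x → ±∞, the quantity c(t) = ∫_ℝ (√m − 1) dx is independent of t. -/
theorem short_pulse_conserved_quantity
    (u : ℝ → ℝ → ℝ) (hu : ContDiff ℝ (⊤ : ℕ∞) (Function.uncurry u))
    (hspe : ∀ x t : ℝ,
      deriv (fun t' => deriv (fun x' => u x' t') x) t
        = u x t + 1 / 6 * deriv (fun x' => deriv (fun x'' => u x'' t ^ 3) x') x)
    (hdom : ∀ a b : ℝ, ∃ g : ℝ → ℝ, Integrable g ∧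
      ∀ t ∈ Set.Icc a b, ∀ x : ℝ,
        |deriv (fun t' => Real.sqrt (1 + deriv (fun s => u s t') x ^ 2) - 1) t| ≤ g x)
    (hint : ∀ t : ℝ,
      Integrable (fun x => Real.sqrt (1 + deriv (fun s => u s t) x ^ 2) - 1))
    (hdecayTop : ∀ t : ℝ,
      Tendsto (fun x => u x t ^ 2 * Real.sqrt (1 + deriv (fun s => u s t) x ^ 2))
        atTop (nhds 0))
    (hdecayBot : ∀ t : ℝ,
      Tendsto (fun x => u x t ^ 2 * Real.sqrt (1 + deriv (fun s => u s t) x ^ 2))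
        atBot (nhds 0)) :
    ∀ t₁ t₂ : ℝ,
      (∫ x : ℝ, (Real.sqrt (1 + deriv (fun s => u s t₁) x ^ 2) - 1))
        = ∫ x : ℝ, (Real.sqrt (1 + deriv (fun s => u s t₂) x ^ 2) - 1) := by
  set U : ℝ × ℝ → ℝ := Function.uncurry u with hU
  set A : ℝ × ℝ → ℝ := fun p => fderiv ℝ U p (1, 0) with hAdef
  have hA : ContDiff ℝ (⊤ : ℕ∞) A := aux_contDiff_pd hu _
  set B : ℝ × ℝ → ℝ := fun p => fderiv ℝ A p (1, 0) with hBdef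
  set C : ℝ × ℝ → ℝ := fun p => fderiv ℝ A p (0, 1) with hCdef
  -- basic partial derivatives
  have hUx : ∀ x t, HasDerivAt (fun x' => u x' t) (A (x, t)) x := fun x t =>
    aux_hasDerivAt_x hu x t
  have hAx : ∀ x t, HasDerivAt (fun x' => A (x', t)) (B (x, t)) x := fun x t =>
    aux_hasDerivAt_x hA x t
  have hAt : ∀ x t, HasDerivAt (fun t' => A (x, t')) (C (x, t)) t := fun x t =>
    aux_hasDerivAt_t hA x t
  have hux : ∀ x t, deriv (fun s => u s t) x = A (x, t) := fun x t => (hUx x t).deriv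
  -- the short pulse equation, rewritten
  have key : ∀ x t, C (x, t)
      = u x t + u x t * A (x, t) ^ 2 + 1 / 2 * u x t ^ 2 * B (x, t) := by
    intro x t
    have h1 : deriv (fun t' => deriv (fun x' => u x' t') x) t = C (x, t) := by
      have he : (fun t' => deriv (fun x' => u x' t') x) = fun t' => A (x, t') :=
        funext fun t' => (hUx x t').deriv
      rw [he]; exact (hAt x t).deriv
    have h2 : (fun x' => deriv (fun x'' => u x'' t ^ 3) x')
        = fun x' => 3 * u x' t ^ 2 * A (x', t) := by
      funext x'
      have := ((hUx x' t).pow 3).deriv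
      rw [show (fun x'' => u x'' t ^ 3) = (fun x'' => u x'' t) ^ 3 from rfl]
      simpa using this
    have h3 : deriv (fun x' => deriv (fun x'' => u x'' t ^ 3) x') x
        = 6 * u x t * A (x, t) ^ 2 + 3 * u x t ^ 2 * B (x, t) := by
      rw [h2]
      have hd : HasDerivAt (fun x' => 3 * u x' t ^ 2 * A (x', t))
          ((3 * (2 * u x t ^ 1 * A (x, t))) * A (x, t)
            + (3 * u x t ^ 2) * B (x, t)) x :=
        (((hUx x t).pow 2).const_mul 3).mul (hAx x t)
      rw [hd.deriv]; ring
    have := hspe x t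
    rw [h1, h3] at this
    rw [this]; ring
  -- time derivative of sqrt m
  have hmpos : ∀ x t, (0 : ℝ) < 1 + A (x, t) ^ 2 := fun x t => by positivity
  have hspos : ∀ x t, (0 : ℝ) < Real.sqrt (1 + A (x, t) ^ 2) := fun x t =>
    Real.sqrt_pos.mpr (hmpos x t)
  set F' : ℝ → ℝ → ℝ := fun t x =>
    A (x, t) * C (x, t) / Real.sqrt (1 + A (x, t) ^ 2) with hF'def
  have hSt : ∀ x t, HasDerivAt (fun t' => Real.sqrt (1 + A (x, t') ^ 2) - 1)
      (F' t x) t := by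
    intro x t
    have hin : HasDerivAt (fun t' => 1 + A (x, t') ^ 2)
        (2 * A (x, t) ^ 1 * C (x, t)) t := ((hAt x t).pow 2).const_add 1
    have hsq := (Real.hasDerivAt_sqrt (hmpos x t).ne').comp t hin
    have := hsq.sub_const 1
    refine this.congr_deriv ?_
    symm
    have hs := (hspos x t).ne'
    rw [hF'def]
    field_simp [hF'def]
  -- the deriv appearing in hdom equals F'
  have hderiv_eq : ∀ x t,
      deriv (fun t' => Real.sqrt (1 + deriv (fun s => u s t') x ^ 2) - 1) t
        = F' t x := by
    intro x t
    have he : (fun t' => Real.sqrt (1 + deriv (fun s => u s t') x ^ 2) - 1)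
        = fun t' => Real.sqrt (1 + A (x, t') ^ 2) - 1 := by
      funext t'; rw [hux]
    rw [he]; exact (hSt x t).deriv
  -- continuity facts
  have hAc : ∀ t, Continuous fun x => A (x, t) := fun t =>
    hA.continuous.comp (continuous_id.prodMk continuous_const)
  have hCc : ∀ t, Continuous fun x => C (x, t) := fun t =>
    (aux_contDiff_pd hA _).continuous.comp (continuous_id.prodMk continuous_const)
  have hF'c : ∀ t, Continuous (F' t) := by
    intro t
    exact ((hAc t).mul (hCc t)).div
      (Real.continuous_sqrt.comp (continuous_const.add ((hAc t).pow 2)))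
      (fun x => (hspos x t).ne')
  -- spatial antiderivative of F' t
  have hGd : ∀ t x, HasDerivAt
      (fun x' => 1 / 2 * u x' t ^ 2 * Real.sqrt (1 + A (x', t) ^ 2)) (F' t x) x := by
    intro t x
    have h1 : HasDerivAt (fun x' => 1 / 2 * u x' t ^ 2)
        (1 / 2 * (2 * u x t ^ 1 * A (x, t))) x := ((hUx x t).pow 2).const_mul (1 / 2)
    have hin : HasDerivAt (fun x' => 1 + A (x', t) ^ 2)
        (2 * A (x, t) ^ 1 * B (x, t)) x := ((hAx x t).pow 2).const_add 1
    have h2 := (Real.hasDerivAt_sqrt (hmpos x t).ne').comp x hin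
    have h3 := h1.mul h2
    refine h3.congr_deriv ?_
    symm
    have hs := (hspos x t).ne'
    have hs2 : Real.sqrt (1 + A (x, t) ^ 2) ^ 2 = 1 + A (x, t) ^ 2 :=
      Real.sq_sqrt (hmpos x t).le
    rw [hF'def]
    simp only [Function.comp_apply]
    field_simp
    rw [key]
    linear_combination (-2 * u x t * A (x, t)) * hs2
  -- the conserved functional
  set c : ℝ → ℝ := fun t => ∫ x : ℝ, (Real.sqrt (1 + A (x, t) ^ 2) - 1) with hcdef
  have hceq : ∀ t, (∫ x : ℝ, (Real.sqrt (1 + deriv (fun s => u s t) x ^ 2) - 1)) = c t := by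
    intro t
    apply integral_congr_ae
    filter_upwards with x
    rw [hux]
  have hint' : ∀ t, Integrable (fun x => Real.sqrt (1 + A (x, t) ^ 2) - 1) := by
    intro t
    have := hint t
    apply this.congr
    filter_upwards with x
    rw [hux]
  -- derivative of c is zero
  have hc : ∀ t₀ : ℝ, HasDerivAt c 0 t₀ := by
    intro t₀
    obtain ⟨g, hg, hgbd⟩ := hdom (t₀ - 1) (t₀ + 1)
    have main := hasDerivAt_integral_of_dominated_loc_of_deriv_le
      (F := fun t x => Real.sqrt (1 + A (x, t) ^ 2) - 1) (F' := F')
      (μ := volume) (x₀ := t₀) (bound := g) (s := Metric.ball t₀ 1) (Metric.ball_mem_nhds t₀ one_pos)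
      (Filter.Eventually.of_forall fun t =>
        (Continuous.aestronglyMeasurable (by have := hAc t; fun_prop)))
      (hint' t₀) ((hF'c t₀).aestronglyMeasurable)
      (Filter.Eventually.of_forall fun x => by
        intro t ht
        have ht' : t ∈ Set.Icc (t₀ - 1) (t₀ + 1) := by
          have := Metric.mem_ball.mp ht
          rw [Real.dist_eq] at this
          constructor <;> [linarith [abs_lt.mp this]; linarith [abs_lt.mp this]]
        have := hgbd t ht' x
        rw [hderiv_eq] at this
        simpa [Real.norm_eq_abs] using this)
      hg
      (Filter.Eventually.of_forall fun x => fun t _ => hSt x t)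
    obtain ⟨hF'int, hder⟩ := main
    -- the integral of F' t₀ is zero
    have hzero : (∫ x : ℝ, F' t₀ x) = 0 := by
      set G : ℝ → ℝ := fun x => 1 / 2 * u x t₀ ^ 2 * Real.sqrt (1 + A (x, t₀) ^ 2) with hGdef
      have hGtop : Tendsto G atTop (nhds 0) := by
        have := (hdecayTop t₀).const_mul (1 / 2 : ℝ)
        simp only [mul_zero] at this
        apply this.congr
        intro x
        rw [hGdef]
        simp only [hux]
        ring
      have hGbot : Tendsto G atBot (nhds 0) := by
        have := (hdecayBot t₀).const_mul (1 / 2 : ℝ)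
        simp only [mul_zero] at this
        apply this.congr
        intro x
        rw [hGdef]
        simp only [hux]
        ring
      have hIoi : (∫ x in Set.Ioi (0:ℝ), F' t₀ x) = 0 - G 0 :=
        integral_Ioi_of_hasDerivAt_of_tendsto' (fun x _ => hGd t₀ x)
          hF'int.integrableOn hGtop
      have hIic : (∫ x in Set.Iic (0:ℝ), F' t₀ x) = G 0 - 0 :=
        integral_Iic_of_hasDerivAt_of_tendsto' (fun x _ => hGd t₀ x)
          hF'int.integrableOn hGbot
      have := intervalIntegral.integral_Iic_add_Ioi (b := (0:ℝ)) (f := F' t₀)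
        hF'int.integrableOn hF'int.integrableOn
      rw [← this, hIoi, hIic]; ring
    rw [hzero] at hder
    exact hder
  intro t₁ t₂
  rw [hceq t₁, hceq t₂]
  exact is_const_of_deriv_eq_zero (fun t => (hc t).differentiableAt)
    (fun t => (hc t).deriv) t₁ t₂
end

section
/- Fix k₀ > 0 and let θ(k) = −(1/(4k₀²))·(k + k₀²/k) for k ∈ ℂ \ {0}. For every real u with 0 ≤ u ≤ 1/√2, the point k = k₀ + u·k₀·e^{−3πi/4} satisfies Re(i·θ(k)) = (√2·u/(8k₀))·(1/(u² − √2·u + 1) − 1), and moreover Re(i·θ(k)) ≥ u²/(4k₀). -/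
/-!
Since `Re (i z) = -Im z` and `Im (k + k₀² / k) = Im k · (1 - k₀² / |k|²)`, the value of
`Re (i θ(k))` depends only on `Im k` and `|k|²`, which on the ray are `-k₀ u / √2` and
`k₀² (u² - √2 u + 1)`. The lower bound then reduces to `u³ (√2 - 2u) ≥ 0`.
-/

open Complex

noncomputable def phase (k₀ : ℝ) (k : ℂ) : ℂ :=
  -(1 / (4 * (k₀ : ℂ) ^ 2)) * (k + (k₀ : ℂ) ^ 2 / k)

noncomputable def rayL1 (k₀ u : ℝ) : ℂ := k₀ + u * k₀ * exp (-(3 * Real.pi / 4) * I)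

lemma Complex.exp_neg_three_pi_div_four_mul_I :
    exp (-(3 * Real.pi / 4) * I) = -(Real.sqrt 2 / 2 : ℝ) - (Real.sqrt 2 / 2 : ℝ) * I := by
  have hcast : -(3 * (Real.pi : ℂ) / 4) = ((-(Real.pi - Real.pi / 4) : ℝ) : ℂ) := by
    push_cast; ring
  rw [hcast, exp_mul_I, ← ofReal_cos, ← ofReal_sin, Real.cos_neg, Real.sin_neg,
    Real.cos_pi_sub, Real.sin_pi_sub, Real.cos_pi_div_four, Real.sin_pi_div_four]
  push_cast
  ring

lemma re_I_mul_phase (k₀ : ℝ) (k : ℂ) :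
    (I * phase k₀ k).re = k.im / (4 * k₀ ^ 2) * (1 - k₀ ^ 2 / normSq k) := by
  have hcoef : -(1 / (4 * (k₀ : ℂ) ^ 2)) = ((-(1 / (4 * k₀ ^ 2)) : ℝ) : ℂ) := by
    push_cast; ring
  have hk : (k₀ : ℂ) ^ 2 / k = ((k₀ ^ 2 : ℝ) : ℂ) * k⁻¹ := by push_cast; ring
  rw [phase, hcoef, hk, I_mul_re, im_ofReal_mul, add_im, im_ofReal_mul, inv_im]
  ring

lemma rayL1_eq (k₀ u : ℝ) :
    rayL1 k₀ u = ⟨k₀ * (1 - u * Real.sqrt 2 / 2), -(k₀ * u * Real.sqrt 2 / 2)⟩ := by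
  rw [rayL1, exp_neg_three_pi_div_four_mul_I, mk_eq_add_mul_I]
  push_cast
  ring

lemma sq_sub_sqrt_two_mul_add_one_pos (u : ℝ) : 0 < u ^ 2 - Real.sqrt 2 * u + 1 := by
  have h2 : Real.sqrt 2 ^ 2 = 2 := Real.sq_sqrt (by norm_num)
  nlinarith [sq_nonneg (u - Real.sqrt 2 / 2)]

lemma re_I_mul_phase_rayL1 {k₀ : ℝ} (hk₀ : k₀ ≠ 0) (u : ℝ) :
    (I * phase k₀ (rayL1 k₀ u)).re
      = Real.sqrt 2 * u / (8 * k₀) * (1 / (u ^ 2 - Real.sqrt 2 * u + 1) - 1) := by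
  have h2 : Real.sqrt 2 ^ 2 = 2 := Real.sq_sqrt (by norm_num)
  have hD := (sq_sub_sqrt_two_mul_add_one_pos u).ne'
  have hnormSq : normSq (rayL1 k₀ u) = k₀ ^ 2 * (u ^ 2 - Real.sqrt 2 * u + 1) := by
    rw [rayL1_eq, normSq_mk]
    linear_combination (k₀ * u) ^ 2 / 2 * h2
  rw [re_I_mul_phase, hnormSq, rayL1_eq]
  field_simp
  ring

lemma sq_div_le_sqrt_two_mul_div_mul_inv_sub_one {k₀ u : ℝ} (hk₀ : 0 < k₀) (hu0 : 0 ≤ u)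
    (hu : u ≤ 1 / Real.sqrt 2) :
    u ^ 2 / (4 * k₀)
      ≤ Real.sqrt 2 * u / (8 * k₀) * (1 / (u ^ 2 - Real.sqrt 2 * u + 1) - 1) := by
  have h2 : Real.sqrt 2 ^ 2 = 2 := Real.sq_sqrt (by norm_num)
  have hD := sq_sub_sqrt_two_mul_add_one_pos u
  have hu' : 2 * u ≤ Real.sqrt 2 := by
    rw [le_div_iff₀ (by positivity)] at hu
    nlinarith [Real.sqrt_nonneg 2]
  have hgap :
      Real.sqrt 2 * u / (8 * k₀) * (1 / (u ^ 2 - Real.sqrt 2 * u + 1) - 1) - u ^ 2 / (4 * k₀)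
        = u ^ 3 * (Real.sqrt 2 - 2 * u) / (8 * k₀ * (u ^ 2 - Real.sqrt 2 * u + 1)) := by
    have hD' : u * (u - Real.sqrt 2) + 1 ≠ 0 :=
      (show 0 < u * (u - Real.sqrt 2) + 1 by linarith).ne'
    field_simp
    linear_combination 4 * u ^ 2 * h2
  rw [← sub_nonneg, hgap]
  exact div_nonneg (mul_nonneg (by positivity) (by linarith)) (by positivity)

/-- On the steepest-descent ray k = k₀ + u·k₀·e^{−3πi/4}, 0 ≤ u ≤ 1/√2, the phase
θ(k) = −(1/(4k₀²))·(k + k₀²/k) satisfies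
Re(iθ(k)) = (√2 u/(8k₀))·(1/(u² − √2 u + 1) − 1), and Re(iθ(k)) ≥ u²/(4k₀). -/
theorem re_i_theta_on_ray_l1 (k₀ u : ℝ) (hk₀ : 0 < k₀) (hu0 : 0 ≤ u)
    (hu : u ≤ 1 / Real.sqrt 2) (k : ℂ)
    (hk : k = (k₀ : ℂ) + (u : ℂ) * (k₀ : ℂ) * Complex.exp (-(3 * Real.pi / 4) * Complex.I)) :
    (Complex.I * (-(1 / (4 * (k₀ : ℂ) ^ 2)) * (k + (k₀ : ℂ) ^ 2 / k))).re
        = Real.sqrt 2 * u / (8 * k₀) * (1 / (u ^ 2 - Real.sqrt 2 * u + 1) - 1) ∧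
      u ^ 2 / (4 * k₀) ≤ (Complex.I * (-(1 / (4 * (k₀ : ℂ) ^ 2)) * (k + (k₀ : ℂ) ^ 2 / k))).re := by
  have hθ := re_I_mul_phase_rayL1 hk₀.ne' u
  rw [phase, rayL1, ← hk] at hθ
  exact ⟨hθ, hθ ▸ sq_div_le_sqrt_two_mul_div_mul_inv_sub_one hk₀ hu0 hu⟩
end

section
/- Let c ∈ ℝ and let a : ℝ → ℂ be a function satisfying a(k) = 1 + i·c·k − (c²/2)·k² + O(k³) as k → 0 (in particular a(k) ≠ 0 for k in some neighborhood of 0). Suppose r : ℝ → ℂ satisfies |r(k)|² = 1/|a(k)|² − 1 for all k near 0. Then |r(k)|² = O(k³) as k → 0; in particular r(k) → 0 as k → 0. -/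
/-!
With p(k) = 1 + ick − (c²/2)k² one has |p(k)|² = 1 + c⁴k⁴/4 exactly: the k² terms cancel because
c is real. Hence |a|² − 1 = (|a|² − |p|²) + c⁴k⁴/4 = O(k³), and since |a|² → 1,
|r|² = 1/|a|² − 1 = −(|a|² − 1)/|a|² = O(k³) as well.
-/

open Filter Asymptotics Topology

namespace Asymptotics

variable {α E 𝕜 : Type*} {l : Filter α}

theorem IsBigO.norm_sq_sub_norm_sq [SeminormedAddCommGroup E] {a p : α → E} {g : α → ℝ}
    (hap : (fun x => a x - p x) =O[l] g) (ha : a =O[l] fun _ => (1 : ℝ))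
    (hp : p =O[l] fun _ => (1 : ℝ)) :
    (fun x => ‖a x‖ ^ 2 - ‖p x‖ ^ 2) =O[l] g := by
  have hdiff : (fun x => ‖a x‖ - ‖p x‖) =O[l] g :=
    (IsBigO.of_bound' (Eventually.of_forall fun x => by
      simpa using abs_norm_sub_norm_le (a x) (p x))).trans hap
  have hsum : (fun x => ‖a x‖ + ‖p x‖) =O[l] fun _ => (1 : ℝ) := ha.norm_left.add hp.norm_left
  exact (hdiff.mul hsum).congr (fun x => by ring) fun x => mul_one _

theorem IsBigO.inv_sub_one [NormedField 𝕜] {f : α → 𝕜} {g : α → ℝ}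
    (hf : Tendsto f l (𝓝 1)) (hfg : (fun x => f x - 1) =O[l] g) :
    (fun x => (f x)⁻¹ - 1) =O[l] g := by
  have hinv : (fun x => (f x)⁻¹) =O[l] fun _ => (1 : ℝ) := by
    simpa using (hf.inv₀ one_ne_zero).isBigO_one ℝ
  refine (hfg.neg_left.mul hinv).congr' ?_ (by simp)
  filter_upwards [hf.eventually_ne one_ne_zero] with x hx
  field_simp
  ring

end Asymptotics

theorem Complex.norm_sq_one_add_I_mul_sub_sq (c k : ℝ) :
    ‖1 + Complex.I * c * k - (c : ℂ) ^ 2 / 2 * k ^ 2‖ ^ 2 = 1 + c ^ 4 * k ^ 4 / 4 := by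
  have hre_im : 1 + Complex.I * c * k - (c : ℂ) ^ 2 / 2 * k ^ 2 =
      ((1 - c ^ 2 / 2 * k ^ 2 : ℝ) : ℂ) + ((c * k : ℝ) : ℂ) * Complex.I := by
    push_cast; ring
  rw [hre_im, Complex.sq_norm, Complex.normSq_add_mul_I]
  ring

/-- If a(k) = 1 + ick − (c²/2)k² + O(k³) as k → 0 (c real) and
|r(k)|² = 1/|a(k)|² − 1 for k near 0, then |r(k)|² = O(k³) as k → 0;
in particular r(k) → 0 as k → 0. -/
theorem reflection_coefficient_small_k (c : ℝ) (a r : ℝ → ℂ)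
    (ha : (fun k : ℝ =>
        a k - (1 + Complex.I * (c : ℂ) * (k : ℂ) - (c : ℂ) ^ 2 / 2 * (k : ℂ) ^ 2))
          =O[nhds 0] fun k : ℝ => k ^ 3)
    (hr : ∀ᶠ k : ℝ in nhds 0, ‖r k‖ ^ 2 = 1 / ‖a k‖ ^ 2 - 1) :
    ((fun k : ℝ => ‖r k‖ ^ 2) =O[nhds 0] fun k : ℝ => k ^ 3) ∧
      Tendsto r (nhds 0) (nhds 0) := by
  set p : ℝ → ℂ := fun k => 1 + Complex.I * c * k - (c : ℂ) ^ 2 / 2 * k ^ 2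
  replace ha : (fun k => a k - p k) =O[𝓝 0] fun k : ℝ => k ^ 3 := ha
  have hp : Tendsto p (𝓝 0) (𝓝 1) := by
    simpa [p] using ((by fun_prop : Continuous p).tendsto 0)
  have hk3 : Tendsto (fun k : ℝ => k ^ 3) (𝓝 0) (𝓝 0) := by
    simpa using (continuous_pow 3).tendsto (0 : ℝ)
  have ha_one : Tendsto a (𝓝 0) (𝓝 1) := by
    simpa using (ha.trans_tendsto hk3).add hp
  have hnorm_sq : Tendsto (fun k => ‖a k‖ ^ 2) (𝓝 0) (𝓝 1) := by
    simpa using ha_one.norm.pow 2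
  have hk4 : (fun k : ℝ => c ^ 4 * k ^ 4 / 4) =O[𝓝 0] fun k : ℝ => k ^ 3 := by
    simpa [mul_div_right_comm] using
      ((isLittleO_pow_pow (𝕜 := ℝ) (by norm_num : 3 < 4)).isBigO.const_mul_left (c ^ 4 / 4))
  have hnorm_sq_sub : (fun k => ‖a k‖ ^ 2 - 1) =O[𝓝 0] fun k : ℝ => k ^ 3 := by
    refine ((ha.norm_sq_sub_norm_sq (ha_one.isBigO_one ℝ) (hp.isBigO_one ℝ)).add hk4).congr
      (fun k => ?_) fun _ => rfl
    rw [Complex.norm_sq_one_add_I_mul_sub_sq]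
    ring
  have hrO : (fun k => ‖r k‖ ^ 2) =O[𝓝 0] fun k : ℝ => k ^ 3 :=
    (IsBigO.inv_sub_one hnorm_sq hnorm_sq_sub).congr' (hr.mono fun k hk => by simp [hk]) .rfl
  refine ⟨hrO, tendsto_zero_iff_norm_tendsto_zero.mpr ?_⟩
  simpa [Real.sqrt_sq (norm_nonneg _)] using (hrO.trans_tendsto hk3).sqrt
end

section
/- Let r ∈ ℂ with r ≠ 0 and set ν = −(1/(2π))·ln(1 + |r|²) (so ν < 0). Define β₁₂ = √(2π)·e^{iπ/4}·e^{−πν/2} / ( conj(r)·Γ(−i·ν) ) and β₂₁ = −√(2π)·e^{−iπ/4}·e^{−πν/2} / ( r·Γ(i·ν) ), where Γ is the complex Gamma function. Then β₁₂·β₂₁ = ν. -/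
/-! The phases e^{±iπ/4} cancel, conj(r)·r = |r|², and the reflection formula gives
Γ(iν)Γ(−iν) = π/(ν sinh πν), so β₁₂β₂₁ = ν·(−2e^{−πν} sinh πν)/|r|² = ν(e^{−2πν} − 1)/|r|²;
the choice of ν is exactly e^{−2πν} = 1 + |r|². -/

open Complex
open scoped Real

namespace Complex

-- No exceptional points: at integers both sides are `0`, since Mathlib's `Gamma` vanishes at its poles.
theorem Gamma_mul_Gamma_neg (z : ℂ) : Gamma z * Gamma (-z) = -π / (z * sin (π * z)) := by
  rcases eq_or_ne z 0 with rfl | hz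
  · simp
  have hreflection := Gamma_mul_Gamma_one_sub z
  rw [show 1 - z = -z + 1 by ring, Gamma_add_one _ (neg_ne_zero.2 hz)] at hreflection
  rw [neg_div, ← div_neg, neg_mul_eq_neg_mul, mul_comm (-z), ← div_div,
    eq_div_iff (neg_ne_zero.2 hz), ← hreflection]
  ring

theorem Gamma_I_mul_mul_Gamma_neg_I_mul (ν : ℝ) :
    Gamma (I * ν) * Gamma (-(I * ν)) = π / (ν * sinh (π * ν)) := by
  rw [Gamma_mul_Gamma_neg, show (π : ℂ) * (I * ν) = π * ν * I by ring, sin_mul_I,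
    show I * ν * (sinh (π * ν) * I) = -(ν * sinh (π * ν)) by ring_nf; rw [I_sq]; ring, div_neg,
    neg_div, neg_neg]

theorem neg_two_mul_exp_neg_mul_sinh (x : ℂ) : -2 * exp (-x) * sinh x = exp (-2 * x) - 1 := by
  have hinv : exp x * exp (-x) = 1 := by rw [← exp_add, add_neg_cancel, exp_zero]
  rw [sinh, show -2 * x = -x + -x by ring, exp_add]
  linear_combination -hinv

end Complex

/-- With ν = −(1/(2π))·ln(1 + |r|²) for r ≠ 0, the coefficients
β₁₂ = √(2π)·e^{iπ/4}·e^{−πν/2}/(conj(r)·Γ(−iν)) and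
β₂₁ = −√(2π)·e^{−iπ/4}·e^{−πν/2}/(r·Γ(iν)) satisfy β₁₂·β₂₁ = ν. -/
theorem beta_product_eq_nu (r : ℂ) (hr : r ≠ 0) (ν : ℝ)
    (hν : ν = -(1 / (2 * Real.pi)) * Real.log (1 + ‖r‖ ^ 2))
    (β₁₂ β₂₁ : ℂ)
    (h12 : β₁₂ = (Real.sqrt (2 * Real.pi) : ℂ) * Complex.exp (Complex.I * Real.pi / 4)
        * Complex.exp (-(Real.pi * ν / 2 : ℝ))
        / ((starRingEnd ℂ) r * Complex.Gamma (-(Complex.I * ν))))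
    (h21 : β₂₁ = -(Real.sqrt (2 * Real.pi) : ℂ) * Complex.exp (-(Complex.I * Real.pi / 4))
        * Complex.exp (-(Real.pi * ν / 2 : ℝ))
        / (r * Complex.Gamma (Complex.I * ν))) :
    β₁₂ * β₂₁ = (ν : ℂ) := by
  have hr' : (‖r‖ : ℂ) ^ 2 ≠ 0 := pow_ne_zero 2 (ofReal_ne_zero.2 (norm_ne_zero_iff.2 hr))
  have hexp : Real.exp (-2 * (π * ν)) = 1 + ‖r‖ ^ 2 := by
    rw [show -2 * (π * ν) = Real.log (1 + ‖r‖ ^ 2) by rw [hν]; field_simp,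
      Real.exp_log (by positivity)]
  have hnorm : (‖r‖ ^ 2 : ℂ) = exp (-2 * (π * ν)) - 1 := by
    have hexpℂ := congrArg ofReal hexp
    push_cast at hexpℂ
    linear_combination -hexpℂ
  have hsqrt : (Real.sqrt (2 * π) : ℂ) * Real.sqrt (2 * π) = 2 * π := by
    rw [← ofReal_mul, Real.mul_self_sqrt (by positivity)]; push_cast; ring
  have hphase : exp (I * π / 4) * exp (-(I * π / 4)) = 1 := by
    rw [← exp_add, add_neg_cancel, exp_zero]
  have hdecay : exp (-(π * ν / 2 : ℝ)) * exp (-(π * ν / 2 : ℝ)) = exp (-(π * ν)) := by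
    rw [← exp_add]; push_cast; ring_nf
  calc β₁₂ * β₂₁
      = -(2 * π) * exp (-(π * ν)) / (starRingEnd ℂ r * r * (Gamma (I * ν) * Gamma (-(I * ν)))) := by
        rw [h12, h21, div_mul_div_comm, ← hsqrt, ← hdecay]
        congr 1
        · linear_combination (-(Real.sqrt (2 * π) : ℂ) * Real.sqrt (2 * π)
            * exp (-(π * ν / 2 : ℝ)) * exp (-(π * ν / 2 : ℝ))) * hphase
        · ring
    _ = ν * (-2 * exp (-(π * ν)) * sinh (π * ν)) / ‖r‖ ^ 2 := by
        rw [conj_mul', Gamma_I_mul_mul_Gamma_neg_I_mul]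
        field_simp
    _ = ν := by
        rw [neg_two_mul_exp_neg_mul_sinh, ← hnorm, mul_div_assoc, div_self hr', mul_one]
end
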